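/- With the setup of the GRS construction (distinct ω_j, nonzero α_j, r = K−D+1, Q_i = (α_j ω_j^{i−1})_j), for every D-subset W̃ ⊆ {1,…,K}, the space of vectors c ∈ F^K supported inside W̃ that lie in the row span of Q₁,…,Q_r is exactly one-dimensional, and every nonzero such vector has support equal to all of W̃ (all D coordinates nonzero). -/
import Mathlib

open Polynomial

theorem grs_unique_codeword_per_support {F : Type*} [Field F] [Fintype F] {K D : ℕ}
    (hKq : K ≤ Fintype.card F) (hD : 1 ≤ D) (hDK : D ≤ K)
    (ω : Fin K → F) (hω : Function.Injective ω)
    (α : Fin K → F) (hα : ∀ j, α j ≠ 0)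
    (Q : Fin (K - D + 1) → (Fin K → F))
    (hQ : ∀ i j, Q i j = α j * ω j ^ (i : ℕ))
    (W : Finset (Fin K)) (hW : W.card = D) :
    ∃ c₀ : Fin K → F, c₀ ≠ 0 ∧ c₀ ∈ Submodule.span F (Set.range Q) ∧
      (∀ j ∉ W, c₀ j = 0) ∧
      (∀ c : Fin K → F, c ∈ Submodule.span F (Set.range Q) → (∀ j ∉ W, c j = 0) →
        ∃ t : F, c = t • c₀) ∧
      (∀ c : Fin K → F, c ∈ Submodule.span F (Set.range Q) → (∀ j ∉ W, c j = 0) →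
        c ≠ 0 → ∀ j ∈ W, c j ≠ 0) := by
  classical
  set g : F[X] := ∏ j ∈ Wᶜ, (X - C (ω j)) with hg
  have hWc : Wᶜ.card = (K - D) := by
    rw [Finset.card_compl, hW, Fintype.card_fin]
  have hgmonic : g.Monic := monic_prod_of_monic _ _ fun j _ => monic_X_sub_C _
  have hgdeg : g.natDegree = (K - D) := by
    rw [hg, natDegree_prod _ _ (fun j _ => X_sub_C_ne_zero (ω j))]
    simp [hWc]
  -- c₀
  set c₀ : Fin K → F := fun j => α j * g.eval (ω j) with hc₀
  have hc₀W : ∀ j ∈ W, c₀ j ≠ 0 := by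
    intro j hj
    have : g.eval (ω j) ≠ 0 := by
      rw [hg, eval_prod]
      refine Finset.prod_ne_zero_iff.mpr fun i hi => ?_
      have : ω j ≠ ω i := fun h => (Finset.mem_compl.mp hi) (hω h ▸ hj)
      simpa [sub_eq_zero] using this
    exact mul_ne_zero (hα j) this
  have hc₀out : ∀ j ∉ W, c₀ j = 0 := by
    intro j hj
    have : g.eval (ω j) = 0 := by
      rw [hg, eval_prod]
      exact Finset.prod_eq_zero (Finset.mem_compl.mpr hj) (by simp)
    simp [hc₀, this]
  have hWne : W.Nonempty := Finset.card_pos.mp (by omega)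
  have hc₀ne : c₀ ≠ 0 := by
    obtain ⟨j, hj⟩ := hWne
    intro h
    exact hc₀W j hj (by rw [h]; rfl)
  -- c₀ in span
  have hc₀span : c₀ ∈ Submodule.span F (Set.range Q) := by
    have : c₀ = ∑ i : Fin (K - D + 1), g.coeff i • Q i := by
      funext j
      have hev : g.eval (ω j) = ∑ i ∈ Finset.range (K - D + 1), g.coeff i * ω j ^ i :=
        eval_eq_sum_range' (by omega) _
      simp only [hc₀, Finset.sum_apply, Pi.smul_apply, smul_eq_mul, hQ, hev]
      rw [Fin.sum_univ_eq_sum_range (fun i => g.coeff i * (α j * ω j ^ i)) (K - D + 1),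
        Finset.mul_sum]
      congr 1; funext i; ring
    rw [this]
    exact Submodule.sum_mem _ fun i _ =>
      Submodule.smul_mem _ _ (Submodule.subset_span (Set.mem_range_self i))
  -- span is contained in evaluations of low-degree polynomials
  set φ : F[X] →ₗ[F] (Fin K → F) := LinearMap.pi (fun j => α j • Polynomial.leval (ω j)) with hφ
  have hφapp : ∀ p j, φ p j = α j * p.eval (ω j) := by
    intro p j; simp [hφ, Polynomial.leval]
  have hspan : Submodule.span F (Set.range Q) ≤
      Submodule.map φ (Polynomial.degreeLT F (K - D + 1)) := by
    rw [Submodule.span_le]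
    rintro _ ⟨i, rfl⟩
    refine ⟨X ^ (i : ℕ), ?_, ?_⟩
    · rw [SetLike.mem_coe, Polynomial.mem_degreeLT, degree_X_pow]
      exact_mod_cast i.isLt
    · funext j; rw [hφapp, hQ]; simp
  -- key: any codeword supported in W is a multiple of c₀
  have hmul : ∀ c : Fin K → F, c ∈ Submodule.span F (Set.range Q) → (∀ j ∉ W, c j = 0) →
      ∃ t : F, c = t • c₀ := by
    intro c hc hcout
    obtain ⟨p, hpdeg, rfl⟩ := hspan hc
    rw [SetLike.mem_coe, Polynomial.mem_degreeLT] at hpdeg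
    set t := p.coeff (K - D) with ht
    set h : F[X] := p - C t * g with hh
    have hhdeg : h.degree < ((K - D : ℕ) : WithBot ℕ) := by
      rw [degree_lt_iff_coeff_zero]
      intro k hk
      have hk' : (K - D : ℕ) ≤ k := by exact_mod_cast hk
      rcases eq_or_lt_of_le hk' with heq | hlt
      · have hgm : g.coeff (K - D) = 1 := by
          rw [← hgdeg]; exact hgmonic.coeff_natDegree
        simp [hh, ← heq, coeff_C_mul, hgm, ht]
      · have h1 : p.coeff k = 0 := by
          apply coeff_eq_zero_of_degree_lt
          exact lt_of_lt_of_le hpdeg (by exact_mod_cast hlt)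
        have h2 : g.coeff k = 0 := by
          apply coeff_eq_zero_of_natDegree_lt
          omega
        simp [hh, coeff_C_mul, h1, h2]
    have hhroots : ∀ x ∈ Wᶜ.image ω, h.eval x = 0 := by
      intro x hx
      obtain ⟨j, hj, rfl⟩ := Finset.mem_image.mp hx
      have hgj : g.eval (ω j) = 0 := by
        rw [hg, eval_prod]
        exact Finset.prod_eq_zero hj (by simp)
      have hpj : p.eval (ω j) = 0 := by
        have := hcout j (Finset.mem_compl.mp hj)
        rw [hφapp] at this
        exact (mul_eq_zero.mp this).resolve_left (hα j)
      simp [hh, hpj, hgj]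
    have hh0 : h = 0 := by
      by_cases hne : h = 0
      · exact hne
      · refine Polynomial.eq_zero_of_natDegree_lt_card_of_eval_eq_zero' h _ hhroots ?_
        rw [Finset.card_image_of_injective _ hω, hWc]
        exact (Polynomial.natDegree_lt_iff_degree_lt hne).mpr hhdeg
    have hpg : p = C t * g := by rw [← sub_eq_zero]; exact hh0
    refine ⟨t, ?_⟩
    funext j
    rw [hφapp, hpg]
    simp [hc₀]; ring
  refine ⟨c₀, hc₀ne, hc₀span, hc₀out, hmul, ?_⟩
  intro c hc hcout hcne j hj
  obtain ⟨t, rfl⟩ := hmul c hc hcout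
  have ht : t ≠ 0 := by rintro rfl; simp at hcne
  simp only [Pi.smul_apply, smul_eq_mul]
  exact mul_ne_zero ht (hc₀W j hj)
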